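/- arXiv:1604.04945 — 2 statements merged into one kernel-verified Lean document; each statement's English description precedes it below -/
import Mathlib

section
/- Let K be a weak left quasi-field containing a skew-field F (under the same operations, with the same 0 and 1) such that (xy)a = x(ya) and (x+y)a = xa + ya for all a ∈ F and x,y ∈ K. Then K is a right vector space over F, and if this vector space is finite-dimensional, then K is a left quasi-field (axiom VW5 holds). -/
/-- A weak left quasi-field: abelian additive group and axioms VW2–VW4. -/
def IsWeakLeftQuasifield {K : Type*} [AddCommGroup K] (mul : K → K → K) (one : K) : Prop :=
  one ≠ 0 ∧
  (∀ a b : K, a ≠ 0 → b ≠ 0 →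
    (∃! x, mul a x = b) ∧ (∃! x, mul x a = b) ∧
    (∀ x, mul a x = b → x ≠ 0) ∧ (∀ x, mul x a = b → x ≠ 0) ∧ mul a b ≠ 0) ∧
  (∀ x : K, mul one x = x ∧ mul x one = x ∧ mul 0 x = 0 ∧ mul x 0 = 0) ∧
  (∀ a x y : K, mul a (x + y) = mul a x + mul a y)

/-! For `a ≠ a'` the map `x ↦ a x - a' x` is additive, and injective because `a z = a' z` with
`z ≠ 0` contradicts the uniqueness of solutions of `x z = c` (VW2). The hypothesis `(xy)a = x(ya)`
makes every left multiplication `F`-linear for the right action of `F`, so this map is an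
injective endomorphism of a finite-dimensional `F`-vector space, hence surjective: this is VW5. -/

namespace IsWeakLeftQuasifield

variable {K : Type*} [AddCommGroup K] {mul : K → K → K} {one : K}

theorem mul_eq_zero_iff_left (hQ : IsWeakLeftQuasifield mul one) {x z : K} (hz : z ≠ 0) :
    mul x z = 0 ↔ x = 0 :=
  ⟨fun h => by_contra fun hx => (hQ.2.1 x z hx hz).2.2.2.2 h, fun h => h ▸ (hQ.2.2.1 z).2.2.1⟩

theorem mul_left_injective (hQ : IsWeakLeftQuasifield mul one) {z : K} (hz : z ≠ 0) :
    Function.Injective (mul · z) := by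
  intro a a' h
  by_cases ha : a = 0
  · subst ha
    exact ((hQ.mul_eq_zero_iff_left hz).1 (h.symm.trans (hQ.2.2.1 z).2.2.1)).symm
  · have hc : mul a z ≠ 0 := mt (hQ.mul_eq_zero_iff_left hz).1 ha
    exact (hQ.2.1 z (mul a z) hz hc).2.1.unique rfl h.symm

def mulLeftAddHom (hQ : IsWeakLeftQuasifield mul one) (a : K) : K →+ K :=
  AddMonoidHom.mk' (mul a) (hQ.2.2.2 a)

theorem injective_mul_sub_mul (hQ : IsWeakLeftQuasifield mul one) {a a' : K} (h : a ≠ a') :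
    Function.Injective (fun x => mul a x - mul a' x) := by
  refine (injective_iff_map_eq_zero (hQ.mulLeftAddHom a - hQ.mulLeftAddHom a')).2 fun z hz => ?_
  by_contra hz0
  exact h (hQ.mul_left_injective hz0 (sub_eq_zero.1 hz))

theorem existsUnique_mul_eq_mul_add {D : Type*} [DivisionRing D] [Module D K]
    [FiniteDimensional D K] (hQ : IsWeakLeftQuasifield mul one)
    (hlin : ∀ (a : K) (c : D) (x : K), mul a (c • x) = c • mul a x)
    {a a' : K} (h : a ≠ a') (b : K) : ∃! x, mul a x = mul a' x + b := by
  let T : K →ₗ[D] K :=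
    { toFun := fun x => mul a x - mul a' x
      map_add' := map_add (hQ.mulLeftAddHom a - hQ.mulLeftAddHom a')
      map_smul' := fun c x => by simp only [hlin, RingHom.id_apply, smul_sub] }
  have hT : Function.Injective T := hQ.injective_mul_sub_mul h
  have hbij : Function.Bijective T := ⟨hT, LinearMap.injective_iff_surjective.1 hT⟩
  simp only [← sub_eq_iff_eq_add']
  exact hbij.existsUnique b

end IsWeakLeftQuasifield

theorem weakLeftQuasifield_of_skewField_finiteDim_general {K F : Type*} [AddCommGroup K]
    [DivisionRing F] (mul : K → K → K) (one : K)
    (hQ : IsWeakLeftQuasifield mul one)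
    (ι : F → K)
    (h1 : ι 1 = one)
    (hadd : ∀ a b : F, ι (a + b) = ι a + ι b)
    (hmulF : ∀ a b : F, ι (a * b) = mul (ι a) (ι b))
    (hassoc : ∀ (a : F) (x y : K), mul (mul x y) (ι a) = mul x (mul y (ι a)))
    (hdistr : ∀ (a : F) (x y : K), mul (x + y) (ι a) = mul x (ι a) + mul y (ι a)) :
    -- K is a right vector space over F:
    ((∀ (x : K) (a b : F), mul x (ι (a * b)) = mul (mul x (ι a)) (ι b)) ∧
     (∀ x : K, mul x (ι 1) = x) ∧
     (∀ (x : K) (a b : F), mul x (ι (a + b)) = mul x (ι a) + mul x (ι b)) ∧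
     (∀ (x y : K) (a : F), mul (x + y) (ι a) = mul x (ι a) + mul y (ι a))) ∧
    -- if finite-dimensional, VW5 holds:
    ((∃ s : Finset K, ∀ x : K, ∃ c : K → F, x = ∑ v ∈ s, mul v (ι (c v))) →
      ∀ a a' b : K, a ≠ a' → ∃! x, mul a x = mul a' x + b) := by
  have hmul : ∀ (x : K) (a b : F), mul x (ι (a * b)) = mul (mul x (ι a)) (ι b) := fun x a b => by
    rw [hmulF, hassoc]
  have hone : ∀ x : K, mul x (ι 1) = x := fun x => h1 ▸ (hQ.2.2.1 x).2.1
  have hadd' : ∀ (x : K) (a b : F), mul x (ι (a + b)) = mul x (ι a) + mul x (ι b) :=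
    fun x a b => by rw [hadd, hQ.2.2.2]
  refine ⟨⟨hmul, hone, hadd', fun x y a => hdistr a x y⟩, ?_⟩
  rintro ⟨s, hs⟩ a a' b hne
  -- A right `F`-vector space is a left `Fᵐᵒᵖ`-module.
  let : SMul Fᵐᵒᵖ K := ⟨fun c x => mul x (ι c.unop)⟩
  let : Module Fᵐᵒᵖ K := .ofMinimalAxioms (fun _ x y => hdistr _ x y)
    (fun _ _ x => hadd' x _ _) (fun _ _ x => hmul x _ _) hone
  have : FiniteDimensional Fᵐᵒᵖ K := by
    refine ⟨⟨s, Submodule.eq_top_iff'.2 fun x => ?_⟩⟩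
    obtain ⟨c, rfl⟩ := hs x
    exact Submodule.sum_mem _ fun v hv =>
      Submodule.smul_mem _ (MulOpposite.op (c v)) (Submodule.subset_span hv)
  exact hQ.existsUnique_mul_eq_mul_add (fun x (c : Fᵐᵒᵖ) y => (hassoc c.unop x y).symm) hne b

/-- A weak left quasi-field containing a skew-field `F` (with the same operations,
0 and 1) such that `(xy)a = x(ya)` and `(x+y)a = xa + ya` for `a ∈ F`, `x, y ∈ K`,
is a right vector space over `F` (with scalar multiplication `x • a := x · ι a`);
and if this vector space is finite-dimensional, then VW5 holds, so `K` is a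
left quasi-field. -/
theorem weakLeftQuasifield_of_skewField_finiteDim {K F : Type*} [AddCommGroup K]
    [DivisionRing F] (mul : K → K → K) (one : K)
    (hQ : IsWeakLeftQuasifield mul one)
    (ι : F → K) (hinj : Function.Injective ι)
    (h0 : ι 0 = 0) (h1 : ι 1 = one)
    (hadd : ∀ a b : F, ι (a + b) = ι a + ι b)
    (hmulF : ∀ a b : F, ι (a * b) = mul (ι a) (ι b))
    (hassoc : ∀ (a : F) (x y : K), mul (mul x y) (ι a) = mul x (mul y (ι a)))
    (hdistr : ∀ (a : F) (x y : K), mul (x + y) (ι a) = mul x (ι a) + mul y (ι a)) :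
    -- K is a right vector space over F:
    ((∀ (x : K) (a b : F), mul x (ι (a * b)) = mul (mul x (ι a)) (ι b)) ∧
     (∀ x : K, mul x (ι 1) = x) ∧
     (∀ (x : K) (a b : F), mul x (ι (a + b)) = mul x (ι a) + mul x (ι b)) ∧
     (∀ (x y : K) (a : F), mul (x + y) (ι a) = mul x (ι a) + mul y (ι a))) ∧
    -- if finite-dimensional, VW5 holds:
    ((∃ s : Finset K, ∀ x : K, ∃ c : K → F, x = ∑ v ∈ s, mul v (ι (c v))) →
      ∀ a a' b : K, a ≠ a' → ∃! x, mul a x = mul a' x + b) :=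
  weakLeftQuasifield_of_skewField_finiteDim_general mul one hQ ι h1 hadd hmulF hassoc hdistr
end

section
/- Let K be a left quasi-field and c, d ∈ K. The map f(x,y) = (x+c, y+d) is a translation of the affine plane K². Consequently, for any two points of K² there is a translation taking one to the other. -/
/-!
By left distributivity, adding `(c, d)` maps the line `x = c₀` to `x = c₀ + c` and the line
`y = a x + b` to `y = a x + (b + d - a c)`, so it moves every line to a parallel one. The fixed
parallel class is the vertical one if `c = 0`; otherwise it is the class of slope `a` with
`a c = d`, which exists by unique solvability. Axiom VW5 says that lines of distinct slopes meet
in exactly one point, so no line outside that class is parallel to it.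
-/

/-- Two lines are parallel if they are equal or disjoint. -/
def Parallel {P : Type*} (l m : Set P) : Prop := l = m ∨ l ∩ m = ∅

/-- A translation: an automorphism taking each line to a parallel line and
preserving every line of some parallel class. -/
def IsTranslation {P : Type*} (L : Set (Set P)) (f : P → P) : Prop :=
  Function.Bijective f ∧
  (∀ l ∈ L, f '' l ∈ L) ∧
  (∀ l ∈ L, Parallel (f '' l) l) ∧
  (∃ l₀ ∈ L, ∀ l ∈ L, Parallel l l₀ → f '' l = l)

/-- A left quasi-field: abelian additive group and axioms VW2–VW5. -/
def IsLeftQuasifield {K : Type*} [AddCommGroup K] (mul : K → K → K) (one : K) : Prop :=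
  one ≠ 0 ∧
  (∀ a b : K, a ≠ 0 → b ≠ 0 →
    (∃! x, mul a x = b) ∧ (∃! x, mul x a = b) ∧
    (∀ x, mul a x = b → x ≠ 0) ∧ (∀ x, mul x a = b → x ≠ 0) ∧ mul a b ≠ 0) ∧
  (∀ x : K, mul one x = x ∧ mul x one = x ∧ mul 0 x = 0 ∧ mul x 0 = 0) ∧
  (∀ a x y : K, mul a (x + y) = mul a x + mul a y) ∧
  (∀ a a' b : K, a ≠ a' → ∃! x, mul a x = mul a' x + b)

/-- The lines of the affine plane K²: vertical lines x = c and lines y = ax + b. -/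
def qLines {K : Type*} [AddCommGroup K] (mul : K → K → K) : Set (Set (K × K)) :=
  {S | (∃ c, S = {p : K × K | p.1 = c}) ∨ (∃ a b, S = {p : K × K | p.2 = mul a p.1 + b})}

namespace Parallel

variable {P : Type*} {l m : Set P}

theorem symm (h : Parallel l m) : Parallel m l :=
  h.imp Eq.symm fun h => Set.inter_comm m l ▸ h

theorem eq_of_mem_of_mem {x : P} (h : Parallel l m) (hl : x ∈ l) (hm : x ∈ m) : l = m :=
  h.resolve_right fun h => Set.eq_empty_iff_forall_notMem.mp h x ⟨hl, hm⟩

end Parallel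

section Lines

variable {K : Type*}

def vLine (c : K) : Set (K × K) := {p | p.1 = c}

theorem parallel_vLine (c₁ c₂ : K) : Parallel (vLine c₁) (vLine c₂) := by
  rcases eq_or_ne c₁ c₂ with rfl | h
  · exact .inl rfl
  · exact .inr (Set.eq_empty_of_forall_notMem fun p hp => h (hp.1.symm.trans hp.2))

variable [AddCommGroup K] {mul : K → K → K}

def sLine (mul : K → K → K) (a b : K) : Set (K × K) := {p | p.2 = mul a p.1 + b}

theorem mem_qLines_iff {l : Set (K × K)} :
    l ∈ qLines mul ↔ (∃ c, l = vLine c) ∨ ∃ a b, l = sLine mul a b :=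
  Iff.rfl

theorem vLine_mem_qLines (c : K) : vLine c ∈ qLines mul := .inl ⟨c, rfl⟩

theorem sLine_mem_qLines (a b : K) : sLine mul a b ∈ qLines mul := .inr ⟨a, b, rfl⟩

theorem parallel_sLine (a b₁ b₂ : K) : Parallel (sLine mul a b₁) (sLine mul a b₂) := by
  rcases eq_or_ne b₁ b₂ with rfl | h
  · exact .inl rfl
  · exact .inr <| Set.eq_empty_of_forall_notMem fun p hp =>
      h (add_left_cancel (hp.1.symm.trans hp.2))

theorem not_parallel_sLine_vLine [Nontrivial K] (a b c : K) :
    ¬ Parallel (sLine mul a b) (vLine c) := by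
  intro h
  have hsv : sLine mul a b = vLine c := h.eq_of_mem_of_mem (x := (c, mul a c + b)) rfl rfl
  obtain ⟨e, he⟩ := exists_ne (0 : K)
  have hmem : (c + e, mul a (c + e) + b) ∈ vLine c := hsv ▸ rfl
  exact he (add_eq_left.mp hmem)

theorem image_add_vLine (c : K) (v : K × K) : (· + v) '' vLine c = vLine (c + v.1) := by
  rw [Set.image_add_right]
  ext p
  simp [vLine, add_neg_eq_iff_eq_add]

theorem image_add_sLine {a : K} (hadd : ∀ x y, mul a (x + y) = mul a x + mul a y)
    (b : K) (v : K × K) : (· + v) '' sLine mul a b = sLine mul a (b + v.2 - mul a v.1) := by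
  have hsub : ∀ x y, mul a (x - y) = mul a x - mul a y := map_sub (AddMonoidHom.mk' (mul a) hadd)
  rw [Set.image_add_right]
  ext p
  change p.2 + -v.2 = mul a (p.1 + -v.1) + b ↔ p.2 = mul a p.1 + (b + v.2 - mul a v.1)
  rw [← sub_eq_add_neg, ← sub_eq_add_neg, hsub]
  constructor
  · intro h
    rw [sub_eq_iff_eq_add.mp h]
    abel
  · intro h
    rw [h]
    abel

end Lines

namespace IsLeftQuasifield

variable {K : Type*} [AddCommGroup K] {mul : K → K → K} {one : K}

theorem nontrivial (hQ : IsLeftQuasifield mul one) : Nontrivial K := ⟨⟨one, 0, hQ.1⟩⟩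

theorem mul_add (hQ : IsLeftQuasifield mul one) (a x y : K) :
    mul a (x + y) = mul a x + mul a y :=
  hQ.2.2.2.1 a x y

theorem exists_mul_eq (hQ : IsLeftQuasifield mul one) {c : K} (hc : c ≠ 0) (d : K) :
    ∃ a, mul a c = d := by
  rcases eq_or_ne d 0 with rfl | hd
  · exact ⟨0, (hQ.2.2.1 c).2.2.1⟩
  · exact (hQ.2.1 c d hc hd).2.1.exists

theorem not_parallel_sLine (hQ : IsLeftQuasifield mul one) {a a' : K} (ha : a ≠ a')
    (b b' : K) : ¬ Parallel (sLine mul a b) (sLine mul a' b') := by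
  have := hQ.nontrivial
  obtain ⟨x, hx, huniq⟩ := hQ.2.2.2.2 a a' (b' - b) ha
  have on_sLine : ∀ y, mul a y = mul a' y + (b' - b) ↔ (y, mul a y + b) ∈ sLine mul a' b' := by
    intro y
    change _ ↔ mul a y + b = mul a' y + b'
    rw [← eq_sub_iff_add_eq, add_sub_assoc]
  intro h
  have heq : sLine mul a b = sLine mul a' b' := h.eq_of_mem_of_mem rfl ((on_sLine x).mp hx)
  -- equal lines would make every abscissa a solution of `a y = a' y + (b' - b)`
  have hall : ∀ y, y = x := fun y => huniq y ((on_sLine y).mpr (heq ▸ rfl))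
  obtain ⟨y, hy⟩ := exists_ne x
  exact hy (hall y)

theorem exists_parallel_class_fixed_by_add (hQ : IsLeftQuasifield mul one) (v : K × K) :
    ∃ l₀ ∈ qLines mul, ∀ l ∈ qLines mul, Parallel l l₀ → (· + v) '' l = l := by
  have := hQ.nontrivial
  rcases eq_or_ne v.1 0 with hv | hv
  · refine ⟨vLine 0, vLine_mem_qLines 0, fun l hl hpar => ?_⟩
    rcases mem_qLines_iff.mp hl with ⟨c, rfl⟩ | ⟨a, b, rfl⟩
    · rw [image_add_vLine, hv, add_zero]
    · exact absurd hpar (not_parallel_sLine_vLine a b 0)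
  · obtain ⟨a, ha⟩ := hQ.exists_mul_eq hv v.2
    refine ⟨sLine mul a 0, sLine_mem_qLines a 0, fun l hl hpar => ?_⟩
    rcases mem_qLines_iff.mp hl with ⟨c, rfl⟩ | ⟨a', b, rfl⟩
    · exact absurd hpar.symm (not_parallel_sLine_vLine a 0 c)
    · obtain rfl : a' = a := by
        by_contra h
        exact hQ.not_parallel_sLine h b 0 hpar
      rw [image_add_sLine (hQ.mul_add a'), ha, add_sub_cancel_right]

theorem isTranslation_add (hQ : IsLeftQuasifield mul one) (v : K × K) :
    IsTranslation (qLines mul) (· + v) := by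
  refine ⟨(Equiv.addRight v).bijective, ?_, ?_, hQ.exists_parallel_class_fixed_by_add v⟩
  · intro l hl
    rcases mem_qLines_iff.mp hl with ⟨c, rfl⟩ | ⟨a, b, rfl⟩
    · rw [image_add_vLine]
      exact vLine_mem_qLines _
    · rw [image_add_sLine (hQ.mul_add a)]
      exact sLine_mem_qLines _ _
  · intro l hl
    rcases mem_qLines_iff.mp hl with ⟨c, rfl⟩ | ⟨a, b, rfl⟩
    · rw [image_add_vLine]
      exact parallel_vLine _ _
    · rw [image_add_sLine (hQ.mul_add a)]
      exact parallel_sLine _ _ _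

end IsLeftQuasifield

/-- For a left quasi-field K and c, d ∈ K, the map (x,y) ↦ (x+c, y+d) is a
translation of the plane K²; consequently for any two points of K² there is a
translation taking one to the other. -/
theorem leftQuasifield_translations {K : Type*} [AddCommGroup K]
    (mul : K → K → K) (one : K) (hQ : IsLeftQuasifield mul one) :
    (∀ c d : K, IsTranslation (qLines mul) (fun p : K × K => (p.1 + c, p.2 + d))) ∧
    (∀ p q : K × K, ∃ f : K × K → K × K,
      IsTranslation (qLines mul) f ∧ f p = q) :=
  ⟨fun c d => hQ.isTranslation_add (c, d),
    fun p q => ⟨(· + (q - p)), hQ.isTranslation_add (q - p), add_sub_cancel p q⟩⟩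
end
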